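/- Let d ∈ ℕ and let p₁ be the uniform probability vector on ℤ_d², p₁(m) = 1/d² for all m. For any probability vector p₂ on ℤ_d², the kernel β(m,n) = Σ_{s∈ℤ_d²} p₂(s) e^{i S(n−m, s)}, where S((k₁,l₁),(k₂,l₂)) = (2π/d)(k₁l₂ − k₂l₁), is a positive semidefinite d²×d² matrix with β(m,m) = 1 for all m, and it satisfies (1/d²) Σ_{m,n} e^{i S(m−n, r)} β(m,n) √(p₁(m)p₁(n)) = p₂(r) for every r ∈ ℤ_d². -/

import Mathlib

open scoped ComplexOrder
open Complex

/-- The symplectic form on the finite phase space `ℤ_d × ℤ_d`. -/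
noncomputable def SympZd (d : ℕ) (m n : ZMod d × ZMod d) : ℝ :=
  (2 * Real.pi / d) * ((m.1.val : ℝ) * (n.2.val : ℝ) - (n.1.val : ℝ) * (m.2.val : ℝ))

/-- The kernel `β(m,n) = Σ_s p₂(s) e^{i S(n−m, s)}`. -/
noncomputable def depolKernel (d : ℕ) [NeZero d] (p₂ : ZMod d × ZMod d → ℝ)
    (m n : ZMod d × ZMod d) : ℂ :=
  ∑ s : ZMod d × ZMod d, (p₂ s : ℂ) * Complex.exp (Complex.I * (SympZd d (n - m) s : ℂ))

/-!
Write `ψ` for the standard character `j ↦ e^{2πij/d}` of `ℤ_d` and `ω(m,n) = k₁l₂ − k₂l₁ ∈ ℤ_d`,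
so that `e^{iS(m,n)} = ψ(ω(m,n))`. Since `ω` is bilinear,
`β(m,n) = Σ_s p₂(s) · conj ψ(ω(m,s)) · ψ(ω(n,s))` is a nonnegative combination of rank-one Gram
matrices, hence positive semidefinite, with diagonal `Σ_s p₂(s) = 1`. In the compatibility sum the
two phases combine to `ψ(ω(m − n, r − s))`, and since `ω` is nondegenerate, character
orthogonality gives `Σ_{m,n} ψ(ω(m − n, t)) = d⁴ [t = 0]`, which picks out `p₂(r)`.
-/

open ZMod

section GramMatrix

variable {ι n 𝕜 : Type*} [Fintype ι] [Fintype n] [RCLike 𝕜]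

theorem Matrix.posSemidef_of_weighted_gram (p : ι → ℝ) (hp : ∀ s, 0 ≤ p s) (v : ι → n → 𝕜) :
    (Matrix.of fun i j => ∑ s, (p s : 𝕜) * (star (v s i) * v s j)).PosSemidef := by
  let B : Matrix ι n 𝕜 := Matrix.of fun s j => (Real.sqrt (p s) : 𝕜) * v s j
  convert Matrix.posSemidef_conjTranspose_mul_self B using 1
  ext i j
  refine Finset.sum_congr rfl fun s _ => ?_
  have hsq : (Real.sqrt (p s) : 𝕜) * (Real.sqrt (p s) : 𝕜) = p s := by
    rw [← RCLike.ofReal_mul, Real.mul_self_sqrt (hp s)]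
  simp only [B, Matrix.conjTranspose_apply, Matrix.of_apply, star_mul', RCLike.star_def,
    RCLike.conj_ofReal, ← hsq]
  ring

end GramMatrix

def symplecticPairing {R : Type*} [CommRing R] (m n : R × R) : R := m.1 * n.2 - n.1 * m.2

theorem symplecticPairing_sub_left {R : Type*} [CommRing R] (a b c : R × R) :
    symplecticPairing (a - b) c = symplecticPairing a c - symplecticPairing b c := by
  simp only [symplecticPairing, Prod.fst_sub, Prod.snd_sub]
  ring

section Phase

variable {d : ℕ} [NeZero d]

theorem exp_I_mul_SympZd (m n : ZMod d × ZMod d) :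
    Complex.exp (Complex.I * SympZd d m n) = stdAddChar (symplecticPairing m n) := by
  have hcast : symplecticPairing m n
      = (((m.1.val * n.2.val - n.1.val * m.2.val : ℤ)) : ZMod d) := by
    push_cast [natCast_val, cast_id]
    rfl
  rw [hcast, stdAddChar_coe, SympZd]
  congr 1
  push_cast
  ring

theorem sum_stdAddChar_symplecticPairing (t : ZMod d × ZMod d) :
    ∑ m, stdAddChar (symplecticPairing m t) = if t = 0 then (d : ℂ) ^ 2 else 0 := by
  have hsplit : ∀ a b : ZMod d,
      symplecticPairing (a, b) t = a * t.2 + b * -t.1 := fun a b => by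
    simp only [symplecticPairing]; ring
  simp only [Fintype.sum_prod_type, hsplit, AddChar.map_add_eq_mul, ← Finset.mul_sum,
    ← Finset.sum_mul, AddChar.sum_mulShift _ (isPrimitive_stdAddChar d), ZMod.card, neg_eq_zero]
  rcases t with ⟨t₁, t₂⟩
  by_cases h₁ : t₁ = 0 <;> by_cases h₂ : t₂ = 0 <;> simp [h₁, h₂, sq]

theorem depolKernel_eq_sum_star_mul (p₂ : ZMod d × ZMod d → ℝ) (m n : ZMod d × ZMod d) :
    depolKernel d p₂ m n = ∑ s, (p₂ s : ℂ) *
      (star (stdAddChar (symplecticPairing m s)) * stdAddChar (symplecticPairing n s)) := by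
  refine Finset.sum_congr rfl fun s _ => ?_
  rw [exp_I_mul_SympZd, symplecticPairing_sub_left, sub_eq_neg_add, AddChar.map_add_eq_mul,
    AddChar.map_neg_eq_conj, RCLike.star_def]

theorem depolKernel_posSemidef (p₂ : ZMod d × ZMod d → ℝ) (hp₂ : ∀ s, 0 ≤ p₂ s) :
    (Matrix.of fun m n => depolKernel d p₂ m n).PosSemidef := by
  simp only [depolKernel_eq_sum_star_mul]
  exact Matrix.posSemidef_of_weighted_gram p₂ hp₂ _

theorem depolKernel_self (p₂ : ZMod d × ZMod d → ℝ) (m : ZMod d × ZMod d) :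
    depolKernel d p₂ m m = ∑ s, (p₂ s : ℂ) := by
  simp [depolKernel, exp_I_mul_SympZd, symplecticPairing]

theorem sum_sum_stdAddChar_symplecticPairing_sub (t : ZMod d × ZMod d) :
    ∑ m, ∑ n, stdAddChar (symplecticPairing (m - n) t) = if t = 0 then (d : ℂ) ^ 4 else 0 := by
  rw [Finset.sum_comm]
  have htranslate : ∀ n : ZMod d × ZMod d, ∑ m, stdAddChar (symplecticPairing (m - n) t)
      = ∑ m, stdAddChar (symplecticPairing m t) := fun n =>
    Fintype.sum_equiv (Equiv.subRight n) _ _ fun _ => rfl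
  simp only [htranslate, sum_stdAddChar_symplecticPairing, Finset.sum_const, Finset.card_univ,
    Fintype.card_prod, ZMod.card, nsmul_eq_mul]
  split_ifs <;> push_cast <;> ring

theorem sum_sum_exp_mul_depolKernel (p₂ : ZMod d × ZMod d → ℝ) (r : ZMod d × ZMod d) :
    ∑ m, ∑ n, Complex.exp (Complex.I * SympZd d (m - n) r) * depolKernel d p₂ m n
      = (d : ℂ) ^ 4 * p₂ r := by
  have hphase : ∀ m n s : ZMod d × ZMod d,
      Complex.exp (Complex.I * SympZd d (m - n) r) * Complex.exp (Complex.I * SympZd d (n - m) s)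
        = stdAddChar (symplecticPairing (m - n) (r - s)) := fun m n s => by
    rw [exp_I_mul_SympZd, exp_I_mul_SympZd, ← AddChar.map_add_eq_mul]
    congr 1
    simp only [symplecticPairing, Prod.fst_sub, Prod.snd_sub]
    ring
  calc ∑ m, ∑ n, Complex.exp (Complex.I * SympZd d (m - n) r) * depolKernel d p₂ m n
      = ∑ s, (p₂ s : ℂ) * ∑ m, ∑ n, stdAddChar (symplecticPairing (m - n) (r - s)) := by
        simp only [depolKernel, Finset.mul_sum]
        rw [Finset.sum_congr rfl fun m _ => Finset.sum_comm, Finset.sum_comm]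
        refine Finset.sum_congr rfl fun s _ => Finset.sum_congr rfl fun m _ =>
          Finset.sum_congr rfl fun n _ => ?_
        rw [← hphase]
        ring
    _ = (d : ℂ) ^ 4 * p₂ r := by
        simp [sum_sum_stdAddChar_symplecticPairing_sub, sub_eq_zero, mul_comm]

end Phase

theorem depolarizing_channel_compatible_general (d : ℕ) [NeZero d]
    (p₁ : ZMod d × ZMod d → ℝ) (hp₁ : ∀ m, p₁ m = 1 / (d : ℝ)^2)
    (p₂ : ZMod d × ZMod d → ℝ) (hp₂pos : ∀ m, 0 ≤ p₂ m)
    (hp₂sum : ∑ m : ZMod d × ZMod d, p₂ m = 1) :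
    Matrix.PosSemidef (Matrix.of fun m n : ZMod d × ZMod d => depolKernel d p₂ m n) ∧
    (∀ m : ZMod d × ZMod d, depolKernel d p₂ m m = 1) ∧
    (∀ r : ZMod d × ZMod d,
      (1 / (d : ℂ)^2) * ∑ m : ZMod d × ZMod d, ∑ n : ZMod d × ZMod d,
        Complex.exp (Complex.I * (SympZd d (m - n) r : ℂ)) * depolKernel d p₂ m n *
          ((Real.sqrt (p₁ m * p₁ n) : ℝ) : ℂ)
      = (p₂ r : ℂ)) := by
  have hsqrt : ∀ m n, ((Real.sqrt (p₁ m * p₁ n) : ℝ) : ℂ) = 1 / (d : ℂ) ^ 2 := fun m n => by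
    rw [hp₁, hp₁, Real.sqrt_mul_self (by positivity)]
    push_cast
    rfl
  refine ⟨depolKernel_posSemidef p₂ hp₂pos, fun m => ?_, fun r => ?_⟩
  · rw [depolKernel_self, ← Complex.ofReal_sum, hp₂sum, Complex.ofReal_one]
  · have hd : (d : ℂ) ≠ 0 := Nat.cast_ne_zero.2 (NeZero.ne d)
    simp only [hsqrt, ← Finset.sum_mul, sum_sum_exp_mul_depolKernel]
    field_simp

theorem depolarizing_channel_compatible (d : ℕ) [NeZero d]
    (p₁ : ZMod d × ZMod d → ℝ) (hp₁ : ∀ m, p₁ m = 1 / (d : ℝ)^2)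
    (p₂ : ZMod d × ZMod d → ℝ) (hp₂pos : ∀ m, 0 ≤ p₂ m) (hp₂le : ∀ m, p₂ m ≤ 1)
    (hp₂sum : ∑ m : ZMod d × ZMod d, p₂ m = 1) :
    Matrix.PosSemidef (Matrix.of fun m n : ZMod d × ZMod d => depolKernel d p₂ m n) ∧
    (∀ m : ZMod d × ZMod d, depolKernel d p₂ m m = 1) ∧
    (∀ r : ZMod d × ZMod d,
      (1 / (d : ℂ)^2) * ∑ m : ZMod d × ZMod d, ∑ n : ZMod d × ZMod d,
        Complex.exp (Complex.I * (SympZd d (m - n) r : ℂ)) * depolKernel d p₂ m n *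
          ((Real.sqrt (p₁ m * p₁ n) : ℝ) : ℂ)
      = (p₂ r : ℂ)) :=
  depolarizing_channel_compatible_general d p₁ hp₁ p₂ hp₂pos hp₂sum
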